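/- arXiv:cs/0701050 — 2 statements merged into one kernel-verified Lean document; each statement's English description precedes it below -/
import Mathlib

section
/- The following two statements are equivalent: (i) for all independent real random variables X, Y with probability densities and finite differential entropies, exp(2·h(X+Y)) ≥ exp(2·h(X)) + exp(2·h(Y)); (ii) for all independent real random variables U, V with probability densities and finite differential entropies and every λ with 0 ≤ λ ≤ 1, h(√λ·U + √(1−λ)·V) ≥ λ·h(U) + (1−λ)·h(V). -/
open MeasureTheory ProbabilityTheory Real
open scoped NNReal ENNReal

/-- Differential entropy `h(X) = E[-log p(X)]` of a random variable `X : Ω → E`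
with respect to a reference measure `ν` on `E` (`p` is the pdf of `X`). -/
noncomputable def diffEntropy {Ω E : Type*} [MeasurableSpace Ω] [MeasurableSpace E]
    (μ : Measure Ω) (ν : Measure E) (X : Ω → E) : ℝ :=
  ∫ ω, - Real.log ((MeasureTheory.pdf X μ ν (X ω)).toReal) ∂μ

/-!
Scaling a real random variable by `c ≠ 0` shifts its differential entropy by `log |c|`, i.e.
multiplies its entropy power `N(X) = exp (2 h(X))` by `c ^ 2`.

(i) ⇒ (ii): apply (i) to `√λ U` and `√(1-λ) V`; this gives
`N(√λ U + √(1-λ) V) ≥ λ N(U) + (1-λ) N(V)`, and by convexity of `exp` the right-hand side is at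
least `exp (2 (λ h(U) + (1-λ) h(V)))`.

(ii) ⇒ (i): with `λ = N(X) / (N(X) + N(Y))`, the rescaled variables `U = X / √λ` and
`V = Y / √(1-λ)` both have entropy power `N(X) + N(Y)`, hence equal entropies, and
`√λ U + √(1-λ) V = X + Y`; so (ii) reads `h(X + Y) ≥ h(U)`, which is (i).
-/

lemma map_const_mul_withDensity {c : ℝ} (hc : c ≠ 0) {p : ℝ → ℝ≥0∞} (hp : Measurable p) :
    (volume.withDensity p).map (c * ·)
      = volume.withDensity (fun x => ENNReal.ofReal |c⁻¹| * p (c⁻¹ * x)) := by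
  have hmeas : Measurable fun x => ENNReal.ofReal |c⁻¹| * p (c⁻¹ * x) :=
    (hp.comp (measurable_const_mul c⁻¹)).const_mul _
  ext s hs
  rw [Measure.map_apply (measurable_const_mul c) hs,
    withDensity_apply _ ((measurable_const_mul c) hs), withDensity_apply _ hs]
  conv_rhs => rw [← Real.smul_map_volume_mul_left hc]
  rw [Measure.restrict_smul, lintegral_smul_measure,
    setLIntegral_map hs hmeas (measurable_const_mul c)]
  simp only [inv_mul_cancel_left₀ hc]
  rw [lintegral_const_mul _ hp, smul_eq_mul, ← mul_assoc, ← ENNReal.ofReal_mul (abs_nonneg _),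
    abs_inv, mul_inv_cancel₀ (abs_ne_zero.mpr hc), ENNReal.ofReal_one, one_mul]

lemma le_of_weighted_exp_two_mul_le {lam u v w : ℝ} (h0 : 0 ≤ lam) (h1 : lam ≤ 1)
    (h : lam * exp (2 * u) + (1 - lam) * exp (2 * v) ≤ exp (2 * w)) :
    lam * u + (1 - lam) * v ≤ w := by
  have hconv := convexOn_exp.2 (Set.mem_univ (2 * u)) (Set.mem_univ (2 * v)) h0
    (sub_nonneg.2 h1) (add_sub_cancel lam 1)
  simp only [smul_eq_mul] at hconv
  have : exp (2 * (lam * u + (1 - lam) * v)) ≤ exp (2 * w) :=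
    calc exp (2 * (lam * u + (1 - lam) * v))
        = exp (lam * (2 * u) + (1 - lam) * (2 * v)) := by ring_nf
      _ ≤ lam * exp (2 * u) + (1 - lam) * exp (2 * v) := hconv
      _ ≤ exp (2 * w) := h
  linarith [exp_le_exp.1 this]

section Scaling

variable {Ω : Type*} [MeasurableSpace Ω] {μ : Measure Ω} {X : Ω → ℝ} {c : ℝ}

lemma map_const_mul_eq_withDensity_pdf (hX : Measurable X) [HasPDF X μ volume] (hc : c ≠ 0) :
    μ.map (fun ω => c * X ω)
      = volume.withDensity (fun x => ENNReal.ofReal |c⁻¹| * pdf X μ volume (c⁻¹ * x)) := by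
  rw [show (fun ω => c * X ω) = (c * ·) ∘ X from rfl, ← Measure.map_map (measurable_const_mul c) hX,
    map_eq_withDensity_pdf X μ volume, map_const_mul_withDensity hc (measurable_pdf X μ volume)]

lemma measurable_scaled_pdf (X : Ω → ℝ) (μ : Measure Ω) (c : ℝ) :
    Measurable fun x => ENNReal.ofReal |c⁻¹| * pdf X μ volume (c⁻¹ * x) :=
  ((measurable_pdf X μ volume).comp (measurable_const_mul c⁻¹)).const_mul _

lemma hasPDF_const_mul (hX : Measurable X) [HasPDF X μ volume] (hc : c ≠ 0) :
    HasPDF (fun ω => c * X ω) μ volume :=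
  hasPDF_of_map_eq_withDensity (hX.const_mul c).aemeasurable _
    (measurable_scaled_pdf X μ c).aemeasurable (map_const_mul_eq_withDensity_pdf hX hc)

lemma pdf_const_mul_ae_eq [IsFiniteMeasure μ] (hX : Measurable X) [HasPDF X μ volume]
    (hc : c ≠ 0) :
    pdf (fun ω => c * X ω) μ volume =ᵐ[volume]
      fun x => ENNReal.ofReal |c⁻¹| * pdf X μ volume (c⁻¹ * x) :=
  have := hasPDF_const_mul (μ := μ) hX hc
  (pdf.eq_of_map_eq_withDensity _ (measurable_scaled_pdf X μ c).aemeasurable).mp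
    (map_const_mul_eq_withDensity_pdf hX hc)

lemma log_pdf_const_mul_ae_eq [IsFiniteMeasure μ] (hX : Measurable X) [HasPDF X μ volume]
    (hc : c ≠ 0) :
    ∀ᵐ ω ∂μ, log (pdf (fun ω => c * X ω) μ volume (c * X ω)).toReal
      = log (pdf X μ volume (X ω)).toReal - log |c| := by
  have := hasPDF_const_mul (μ := μ) hX hc
  have hacX : μ.map X ≪ volume := HasPDF.absolutelyContinuous
  have hpdf : ∀ᵐ ω ∂μ, pdf (fun ω => c * X ω) μ volume (c * X ω)
      = ENNReal.ofReal |c⁻¹| * pdf X μ volume (c⁻¹ * (c * X ω)) :=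
    ae_of_ae_map (hX.const_mul c).aemeasurable
      ((pdf_const_mul_ae_eq hX hc).filter_mono HasPDF.absolutelyContinuous.ae_le)
  have hpos : ∀ᵐ ω ∂μ, 0 < pdf X μ volume (X ω) :=
    ae_of_ae_map hX.aemeasurable (Measure.rnDeriv_pos hacX)
  have hlt : ∀ᵐ ω ∂μ, pdf X μ volume (X ω) < ∞ :=
    ae_of_ae_map hX.aemeasurable (hacX.ae_le (Measure.rnDeriv_lt_top _ _))
  filter_upwards [hpdf, hpos, hlt] with ω hω hωpos hωlt
  rw [hω, inv_mul_cancel_left₀ hc, ENNReal.toReal_mul, ENNReal.toReal_ofReal (abs_nonneg _),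
    log_mul (abs_ne_zero.mpr (inv_ne_zero hc)) (ENNReal.toReal_ne_zero.mpr ⟨hωpos.ne', hωlt.ne⟩),
    abs_inv, log_inv]
  ring

lemma integrable_log_pdf_const_mul [IsFiniteMeasure μ] (hX : Measurable X) [HasPDF X μ volume]
    (hint : Integrable (fun ω => log (pdf X μ volume (X ω)).toReal) μ) (hc : c ≠ 0) :
    Integrable (fun ω => log (pdf (fun ω => c * X ω) μ volume (c * X ω)).toReal) μ :=
  (hint.sub (integrable_const _)).congr
    ((log_pdf_const_mul_ae_eq hX hc).mono fun _ h => h.symm)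

lemma diffEntropy_const_mul [IsProbabilityMeasure μ] (hX : Measurable X) [HasPDF X μ volume]
    (hint : Integrable (fun ω => log (pdf X μ volume (X ω)).toReal) μ) (hc : c ≠ 0) :
    diffEntropy μ volume (fun ω => c * X ω) = diffEntropy μ volume X + log |c| := by
  unfold diffEntropy
  rw [integral_congr_ae ((log_pdf_const_mul_ae_eq hX hc).mono fun _ h => congrArg Neg.neg h),
    integral_neg, integral_neg, integral_sub hint (integrable_const _), integral_const,
    probReal_univ, one_smul]
  ring

lemma exp_two_mul_diffEntropy_const_mul [IsProbabilityMeasure μ] (hX : Measurable X)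
    [HasPDF X μ volume] (hint : Integrable (fun ω => log (pdf X μ volume (X ω)).toReal) μ)
    (hc : c ≠ 0) :
    exp (2 * diffEntropy μ volume (fun ω => c * X ω))
      = c ^ 2 * exp (2 * diffEntropy μ volume X) := by
  rw [diffEntropy_const_mul hX hint hc, mul_add, exp_add, mul_comm, two_mul, exp_add,
    exp_log (abs_pos.mpr hc), ← sq, sq_abs]

end Scaling

section EntropyPower

variable {Ω : Type*} [MeasurableSpace Ω] (μ : Measure Ω)

def EntropyPowerInequality : Prop :=
  ∀ (X Y : Ω → ℝ), Measurable X → Measurable Y → IndepFun X Y μ →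
    HasPDF X μ volume → HasPDF Y μ volume →
    Integrable (fun ω => log ((pdf X μ volume (X ω)).toReal)) μ →
    Integrable (fun ω => log ((pdf Y μ volume (Y ω)).toReal)) μ →
    exp (2 * diffEntropy μ volume (fun ω => X ω + Y ω))
      ≥ exp (2 * diffEntropy μ volume X) + exp (2 * diffEntropy μ volume Y)

def EntropyConcavity : Prop :=
  ∀ (U V : Ω → ℝ), Measurable U → Measurable V → IndepFun U V μ →
    HasPDF U μ volume → HasPDF V μ volume →
    Integrable (fun ω => log ((pdf U μ volume (U ω)).toReal)) μ →
    Integrable (fun ω => log ((pdf V μ volume (V ω)).toReal)) μ →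
    ∀ lam : ℝ, 0 ≤ lam → lam ≤ 1 →
      diffEntropy μ volume (fun ω => √lam * U ω + √(1 - lam) * V ω)
        ≥ lam * diffEntropy μ volume U + (1 - lam) * diffEntropy μ volume V

variable {μ} [IsProbabilityMeasure μ]

theorem EntropyPowerInequality.entropyConcavity (hEPI : EntropyPowerInequality μ) :
    EntropyConcavity μ := by
  intro U V hU hV hUV _ _ hIU hIV lam hlam0 hlam1
  rcases hlam0.eq_or_lt with rfl | hlam_pos
  · simp
  rcases hlam1.eq_or_lt with rfl | hlam_lt
  · simp
  have hc : √lam ≠ 0 := (sqrt_pos.2 hlam_pos).ne'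
  have hd : √(1 - lam) ≠ 0 := (sqrt_pos.2 (sub_pos.2 hlam_lt)).ne'
  have := hasPDF_const_mul (μ := μ) hU hc
  have := hasPDF_const_mul (μ := μ) hV hd
  have hEPI' := hEPI _ _ (hU.const_mul _) (hV.const_mul _)
    (hUV.comp (measurable_const_mul _) (measurable_const_mul _))
    ‹_› ‹_› (integrable_log_pdf_const_mul hU hIU hc) (integrable_log_pdf_const_mul hV hIV hd)
  rw [exp_two_mul_diffEntropy_const_mul hU hIU hc, exp_two_mul_diffEntropy_const_mul hV hIV hd,
    sq_sqrt hlam0, sq_sqrt (sub_nonneg.2 hlam1)] at hEPI'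
  exact le_of_weighted_exp_two_mul_le hlam0 hlam1 hEPI'

theorem EntropyConcavity.entropyPowerInequality (hconc : EntropyConcavity μ) :
    EntropyPowerInequality μ := by
  intro X Y hX hY hXY _ _ hIX hIY
  set s := exp (2 * diffEntropy μ volume X) + exp (2 * diffEntropy μ volume Y)
  have hs : 0 < s := by positivity
  set lam := exp (2 * diffEntropy μ volume X) / s
  have hlam_pos : 0 < lam := by positivity
  have hlam_lt : lam < 1 := (div_lt_one hs).2 (lt_add_of_pos_right _ (exp_pos _))
  have h1lam : 1 - lam = exp (2 * diffEntropy μ volume Y) / s := by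
    rw [eq_div_iff hs.ne', sub_mul, div_mul_cancel₀ _ hs.ne']
    ring
  have hc₀ : √lam ≠ 0 := (sqrt_pos.2 hlam_pos).ne'
  have hd₀ : √(1 - lam) ≠ 0 := (sqrt_pos.2 (sub_pos.2 hlam_lt)).ne'
  have hc := inv_ne_zero hc₀
  have hd := inv_ne_zero hd₀
  have := hasPDF_const_mul (μ := μ) hX hc
  have := hasPDF_const_mul (μ := μ) hY hd
  have hU : exp (2 * diffEntropy μ volume (fun ω => (√lam)⁻¹ * X ω)) = s := by
    rw [exp_two_mul_diffEntropy_const_mul hX hIX hc, inv_pow, sq_sqrt hlam_pos.le,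
      ← div_eq_inv_mul, div_div_cancel₀ (exp_pos _).ne']
  have hV : exp (2 * diffEntropy μ volume (fun ω => (√(1 - lam))⁻¹ * Y ω)) = s := by
    rw [exp_two_mul_diffEntropy_const_mul hY hIY hd, inv_pow, sq_sqrt (sub_pos.2 hlam_lt).le,
      h1lam, ← div_eq_inv_mul, div_div_cancel₀ (exp_pos _).ne']
  have hconc' := hconc _ _ (hX.const_mul _) (hY.const_mul _)
    (hXY.comp (measurable_const_mul _) (measurable_const_mul _))
    ‹_› ‹_› (integrable_log_pdf_const_mul hX hIX hc) (integrable_log_pdf_const_mul hY hIY hd)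
    lam hlam_pos.le hlam_lt.le
  simp only [mul_inv_cancel_left₀ hc₀, mul_inv_cancel_left₀ hd₀] at hconc'
  have hentropy_eq : diffEntropy μ volume (fun ω => (√lam)⁻¹ * X ω)
      = diffEntropy μ volume (fun ω => (√(1 - lam))⁻¹ * Y ω) := by
    have := exp_injective (hU.trans hV.symm)
    linarith
  rw [hentropy_eq, ← add_mul, add_sub_cancel, one_mul] at hconc'
  rw [ge_iff_le, ← hV, exp_le_exp]
  linarith

end EntropyPower

/-- Equivalence of the two standard formulations of the entropy power inequality:
(i) `exp(2 h(X+Y)) ≥ exp(2 h(X)) + exp(2 h(Y))` for all independent `X, Y` with densities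
and finite differential entropies, and (ii) the concavity form
`h(√λ U + √(1-λ) V) ≥ λ h(U) + (1-λ) h(V)` for all such `U, V` and all `0 ≤ λ ≤ 1`. -/
theorem epi_iff_concavity_form :
    (∀ (Ω : Type) (_ : MeasurableSpace Ω) (μ : Measure Ω), IsProbabilityMeasure μ →
      ∀ (X Y : Ω → ℝ), Measurable X → Measurable Y → IndepFun X Y μ →
        HasPDF X μ volume → HasPDF Y μ volume →
        Integrable (fun ω => Real.log ((MeasureTheory.pdf X μ volume (X ω)).toReal)) μ →
        Integrable (fun ω => Real.log ((MeasureTheory.pdf Y μ volume (Y ω)).toReal)) μ →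
        Real.exp (2 * diffEntropy μ volume (fun ω => X ω + Y ω))
          ≥ Real.exp (2 * diffEntropy μ volume X) + Real.exp (2 * diffEntropy μ volume Y))
    ↔
    (∀ (Ω : Type) (_ : MeasurableSpace Ω) (μ : Measure Ω), IsProbabilityMeasure μ →
      ∀ (U V : Ω → ℝ), Measurable U → Measurable V → IndepFun U V μ →
        HasPDF U μ volume → HasPDF V μ volume →
        Integrable (fun ω => Real.log ((MeasureTheory.pdf U μ volume (U ω)).toReal)) μ →
        Integrable (fun ω => Real.log ((MeasureTheory.pdf V μ volume (V ω)).toReal)) μ →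
        ∀ lam : ℝ, 0 ≤ lam → lam ≤ 1 →
          diffEntropy μ volume (fun ω => Real.sqrt lam * U ω + Real.sqrt (1 - lam) * V ω)
            ≥ lam * diffEntropy μ volume U + (1 - lam) * diffEntropy μ volume V) :=
  ⟨fun hEPI Ω _ μ _ => EntropyPowerInequality.entropyConcavity (hEPI Ω _ μ ‹_›),
    fun hconc Ω _ μ _ => EntropyConcavity.entropyPowerInequality (hconc Ω _ μ ‹_›)⟩
end

section
/- Let X and Y be independent real random variables with finite variances, let Z' and Z'' be standard Gaussian random variables, independent of (X, Y) and of each other, let 0 ≤ λ ≤ 1, and set W = √λ·X + √(1−λ)·Y and Z = √λ·Z' + √(1−λ)·Z''. Then for every t ≥ 0, Var(W | √t·W + Z) ≥ Var(W | √t·X + Z', √t·Y + Z''); that is, it is better to estimate the sum of independent random variables from individual noisy measurements than from the sum of these measurements. -/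
/-!
The single observation `√t W + Z = √λ (√t X + Z') + √(1-λ) (√t Y + Z'')` is a measurable function
of the pair of observations, so it generates a coarser σ-algebra. Conditioning on less information
can only increase the mean-square error: by the law of total variance,
`E[(W - E[W|m])²] = Var W - Var E[W|m]`, and by the tower property and the same law,
`Var E[W|m]` is monotone in `m`.
-/

open MeasureTheory ProbabilityTheory Real
open scoped NNReal ENNReal

/-- Conditional variance `Var(X|Y) = E[(X - E[X|Y])²]`, the MMSE of estimating `X` from `Y`. -/
noncomputable def condVarNum {Ω β : Type*} [MeasurableSpace Ω] [MeasurableSpace β]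
    (μ : Measure Ω) (X : Ω → ℝ) (Y : Ω → β) : ℝ :=
  ∫ ω, (X ω - (μ[X | MeasurableSpace.comap Y inferInstance]) ω) ^ 2 ∂μ

namespace ProbabilityTheory

variable {Ω : Type*} {m m₁ m₂ m₀ : MeasurableSpace Ω} {μ : Measure[m₀] Ω}
  [IsProbabilityMeasure μ] {X : Ω → ℝ}

lemma integral_sq_sub_condExp_eq_variance_sub (hm : m ≤ m₀) (hX : MemLp X 2 μ) :
    ∫ ω, (X ω - μ[X | m] ω) ^ 2 ∂μ = Var[X; μ] - Var[μ[X | m]; μ] := by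
  rw [← integral_condVar_add_variance_condExp hm hX, condVar, integral_condExp hm,
    add_sub_cancel_right]
  rfl

lemma variance_condExp_le (hm : m ≤ m₀) (hX : MemLp X 2 μ) :
    Var[μ[X | m]; μ] ≤ Var[X; μ] := by
  have hsq := integral_sq_sub_condExp_eq_variance_sub hm hX
  have hnonneg : 0 ≤ ∫ ω, (X ω - μ[X | m] ω) ^ 2 ∂μ := integral_nonneg fun _ => sq_nonneg _
  linarith

lemma variance_condExp_mono (h₁₂ : m₁ ≤ m₂) (h₂ : m₂ ≤ m₀) (hX : MemLp X 2 μ) :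
    Var[μ[X | m₁]; μ] ≤ Var[μ[X | m₂]; μ] := by
  rw [← variance_congr (condExp_condExp_of_le h₁₂ h₂)]
  exact variance_condExp_le (h₁₂.trans h₂) (hX.condExp one_le_two)

lemma integral_sq_sub_condExp_anti (h₁₂ : m₁ ≤ m₂) (h₂ : m₂ ≤ m₀) (hX : MemLp X 2 μ) :
    ∫ ω, (X ω - μ[X | m₂] ω) ^ 2 ∂μ ≤ ∫ ω, (X ω - μ[X | m₁] ω) ^ 2 ∂μ := by
  rw [integral_sq_sub_condExp_eq_variance_sub h₂ hX,
    integral_sq_sub_condExp_eq_variance_sub (h₁₂.trans h₂) hX]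
  exact sub_le_sub_left (variance_condExp_mono h₁₂ h₂ hX) _

end ProbabilityTheory

lemma condVarNum_le_condVarNum_comp {Ω β γ : Type*} [MeasurableSpace Ω] [MeasurableSpace β]
    [MeasurableSpace γ] {μ : Measure Ω} [IsProbabilityMeasure μ] {X : Ω → ℝ} {Y : Ω → β}
    {φ : β → γ} (hX : MemLp X 2 μ) (hY : Measurable Y) (hφ : Measurable φ) :
    condVarNum μ X Y ≤ condVarNum μ X (φ ∘ Y) := by
  refine integral_sq_sub_condExp_anti ?_ hY.comap_le hX
  rw [← MeasurableSpace.comap_comp]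
  exact MeasurableSpace.comap_mono hφ.comap_le

theorem condVar_sum_ge_condVar_individual_general
    {Ω : Type*} [MeasurableSpace Ω] (μ : Measure Ω) [IsProbabilityMeasure μ]
    (X Y Z' Z'' : Ω → ℝ)
    (hX : Measurable X) (hY : Measurable Y) (hZ' : Measurable Z') (hZ'' : Measurable Z'')
    (hXvar : MemLp X 2 μ) (hYvar : MemLp Y 2 μ)
    (lam : ℝ)
    (W Z : Ω → ℝ)
    (hW : W = fun ω => Real.sqrt lam * X ω + Real.sqrt (1 - lam) * Y ω)
    (hZ : Z = fun ω => Real.sqrt lam * Z' ω + Real.sqrt (1 - lam) * Z'' ω)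
    (t : ℝ) :
    condVarNum μ W (fun ω => Real.sqrt t * W ω + Z ω)
      ≥ condVarNum μ W
          (fun ω => (Real.sqrt t * X ω + Z' ω, Real.sqrt t * Y ω + Z'' ω)) := by
  have hW2 : MemLp W 2 μ := hW ▸ (hXvar.const_mul _).add (hYvar.const_mul _)
  have hsum : (fun ω => √t * W ω + Z ω) =
      (fun p : ℝ × ℝ => √lam * p.1 + √(1 - lam) * p.2) ∘
        (fun ω => (√t * X ω + Z' ω, √t * Y ω + Z'' ω)) := by
    subst hW hZ
    funext ω
    simp only [Function.comp_apply]
    ring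
  rw [ge_iff_le, hsum]
  exact condVarNum_le_condVarNum_comp hW2 (by fun_prop) (by fun_prop)

/-- It is better to estimate the sum of independent random variables from individual noisy
measurements than from the sum of these measurements: with `W = √λ X + √(1-λ) Y` and
`Z = √λ Z' + √(1-λ) Z''` for independent standard Gaussians `Z', Z''` independent of `(X,Y)`,
`Var(W | √t W + Z) ≥ Var(W | √t X + Z', √t Y + Z'')` for every `t ≥ 0`. -/
theorem condVar_sum_ge_condVar_individual
    {Ω : Type*} [MeasurableSpace Ω] (μ : Measure Ω) [IsProbabilityMeasure μ]
    (X Y Z' Z'' : Ω → ℝ)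
    (hX : Measurable X) (hY : Measurable Y) (hZ' : Measurable Z') (hZ'' : Measurable Z'')
    (hXvar : MemLp X 2 μ) (hYvar : MemLp Y 2 μ)
    (hXY : IndepFun X Y μ)
    (hZ'Z'' : IndepFun Z' Z'' μ)
    (hZind : IndepFun (fun ω => (X ω, Y ω)) (fun ω => (Z' ω, Z'' ω)) μ)
    (hZ'gauss : Measure.map Z' μ = gaussianReal 0 1)
    (hZ''gauss : Measure.map Z'' μ = gaussianReal 0 1)
    (lam : ℝ) (hlam0 : 0 ≤ lam) (hlam1 : lam ≤ 1)
    (W Z : Ω → ℝ)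
    (hW : W = fun ω => Real.sqrt lam * X ω + Real.sqrt (1 - lam) * Y ω)
    (hZ : Z = fun ω => Real.sqrt lam * Z' ω + Real.sqrt (1 - lam) * Z'' ω)
    (t : ℝ) (ht : 0 ≤ t) :
    condVarNum μ W (fun ω => Real.sqrt t * W ω + Z ω)
      ≥ condVarNum μ W
          (fun ω => (Real.sqrt t * X ω + Z' ω, Real.sqrt t * Y ω + Z'' ω)) :=
  condVar_sum_ge_condVar_individual_general μ X Y Z' Z'' hX hY hZ' hZ'' hXvar hYvar lam W Z hW hZ t
end
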